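/- Let Ω be a finite state space, X: Ω → ℝ a security, and ω_a, ω_b, ω_c, ω_d four distinct states with X(ω_a) = a, X(ω_b) = b, X(ω_c) = c, X(ω_d) = d and a ≤ b < c ≤ d. Set D = a + b − c − d (so D < 0), p_1 = (b − d)/D, q_1 = (a − c)/D, p_2 = (b − c)/D. Define Π_1 as the partition of Ω with cells {ω_a, ω_d}, {ω_b, ω_c} and singletons for all other states, and Π_2 as the partition with cells {ω_a, ω_c}, {ω_b, ω_d} and singletons elsewhere, and define the prior μ by μ(ω_a) = p_2·p_1, μ(ω_d) = p_2·(1 − p_1), μ(ω_b) = (1 − p_2)·q_1, μ(ω_c) = (1 − p_2)·(1 − q_1), and μ(ω) = 0 otherwise. Then μ is a probability distribution with supp μ = {ω_a, ω_b, ω_c, ω_d}, each of p_1, q_1, p_2 lies strictly between 0 and 1, E_μ[X | Π_i(ω)] = (ab − cd)/D for i = 1, 2 and every ω ∈ supp μ, and X is non-separable at μ under Π = (Π_1, Π_2) with value v = (ab − cd)/D (in particular v lies strictly between b and c, so v ≠ b = X(ω_b)). -/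
import Mathlib


noncomputable section
open scoped Classical
open Finset

/-- A partition of `Ω` given by its cell map: `C ω` is the cell containing `ω`. -/
def IsPartitionFun {Ω : Type*} (C : Ω → Set Ω) : Prop :=
  (∀ ω, ω ∈ C ω) ∧ ∀ ω ω', ω' ∈ C ω → C ω' = C ω

/-- The fine-join property: the intersection of all traders' cells at `ω` is `{ω}`. -/
def FineJoin {Ω : Type*} {n : ℕ} (C : Fin n → Ω → Set Ω) : Prop :=
  ∀ ω ω', (∀ i, ω' ∈ C i ω) → ω' = ω

/-- A prior: a probability distribution on the finite state space. -/
def IsPrior {Ω : Type*} [Fintype Ω] (μ : Ω → ℝ) : Prop :=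
  (∀ ω, 0 ≤ μ ω) ∧ ∑ ω, μ ω = 1

/-- Support of a prior. -/
def suppSet {Ω : Type*} (μ : Ω → ℝ) : Set Ω := {ω | 0 < μ ω}

/-- Conditional expectation `E_μ[X | S]`. -/
def condExp {Ω : Type*} [Fintype Ω] (μ X : Ω → ℝ) (S : Set Ω) : ℝ :=
  (∑ ω, if ω ∈ S then μ ω * X ω else 0) / (∑ ω, if ω ∈ S then μ ω else 0)

/-- `X` is non-separable at prior `μ` with value `v` under the information structure `C`. -/
def NonSeparableAt {Ω : Type*} [Fintype Ω] {n : ℕ}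
    (C : Fin n → Ω → Set Ω) (X μ : Ω → ℝ) (v : ℝ) : Prop :=
  (∃ ω ∈ suppSet μ, X ω ≠ v) ∧
  ∀ (i : Fin n) (ω : Ω), ω ∈ suppSet μ → condExp μ X (C i ω) = v

/-- `X` is separable under the information structure `C`. -/
def SeparableSec {Ω : Type*} [Fintype Ω] {n : ℕ}
    (C : Fin n → Ω → Set Ω) (X : Ω → ℝ) : Prop :=
  ¬ ∃ (μ : Ω → ℝ) (v : ℝ), IsPrior μ ∧ NonSeparableAt C X μ v

/-- Arrow–Debreu security: pays `a` at one state, `b ≠ a` at all other states. -/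
def ArrowDebreu {Ω : Type*} (X : Ω → ℝ) : Prop :=
  ∃ (a b : ℝ) (ωs : Ω), a ≠ b ∧ X ωs = a ∧ ∀ ω, ω ≠ ωs → X ω = b

/-- Three-value form: pays `a < b < d` with `a` at one state, `d` at another, `b` elsewhere. -/
def ThreeValueForm {Ω : Type*} (X : Ω → ℝ) : Prop :=
  ∃ (a b d : ℝ) (ωa ωd : Ω), a < b ∧ b < d ∧ ωa ≠ ωd ∧
    X ωa = a ∧ X ωd = d ∧ ∀ ω, ω ≠ ωa → ω ≠ ωd → X ω = b

lemma sum_two' {Ω : Type*} [Fintype Ω] (f : Ω → ℝ) (x y : Ω) (hxy : x ≠ y)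
    (h0 : ∀ ω, ω ≠ x → ω ≠ y → f ω = 0) : ∑ ω, f ω = f x + f y := by
  classical
  have h : ∑ ω, f ω = ∑ ω ∈ ({x, y} : Finset Ω), f ω := by
    refine (Finset.sum_subset (Finset.subset_univ _) ?_).symm
    intro u _ hu
    simp only [Finset.mem_insert, Finset.mem_singleton, not_or] at hu
    exact h0 u hu.1 hu.2
  rw [h, Finset.sum_insert (by simp [hxy]), Finset.sum_singleton]

lemma sum_four' {Ω : Type*} [Fintype Ω] (f : Ω → ℝ) (x y z w : Ω)
    (hxy : x ≠ y) (hxz : x ≠ z) (hxw : x ≠ w)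
    (hyz : y ≠ z) (hyw : y ≠ w) (hzw : z ≠ w)
    (h0 : ∀ ω, ω ≠ x → ω ≠ y → ω ≠ z → ω ≠ w → f ω = 0) :
    ∑ ω, f ω = f x + f y + f z + f w := by
  classical
  have h : ∑ ω, f ω = ∑ ω ∈ ({x, y, z, w} : Finset Ω), f ω := by
    refine (Finset.sum_subset (Finset.subset_univ _) ?_).symm
    intro u _ hu
    simp only [Finset.mem_insert, Finset.mem_singleton, not_or] at hu
    exact h0 u hu.1 hu.2.1 hu.2.2.1 hu.2.2.2
  rw [h, Finset.sum_insert (by simp [hxy, hxz, hxw]),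
    Finset.sum_insert (by simp [hyz, hyw]), Finset.sum_insert (by simp [hzw]),
    Finset.sum_singleton]
  ring

lemma condExp_pair' {Ω : Type*} [Fintype Ω] (μ X : Ω → ℝ) (x y : Ω) (hxy : x ≠ y) :
    condExp μ X {x, y} = (μ x * X x + μ y * X y) / (μ x + μ y) := by
  unfold condExp
  rw [sum_two' _ x y hxy
      (by intro ω hx hy; simp [Set.mem_insert_iff, Set.mem_singleton_iff, hx, hy]),
    sum_two' _ x y hxy
      (by intro ω hx hy; simp [Set.mem_insert_iff, Set.mem_singleton_iff, hx, hy])]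
  simp

set_option maxHeartbeats 1600000 in
/-- explicit construction of a common prior witnessing
non-separability when `X` takes values `a ≤ b < c ≤ d` at four distinct states. -/
theorem nonseparable_explicit_construction {Ω : Type*} [Fintype Ω] (X : Ω → ℝ)
    (ωa ωb ωc ωd : Ω)
    (hab : ωa ≠ ωb) (hac : ωa ≠ ωc) (had : ωa ≠ ωd)
    (hbc : ωb ≠ ωc) (hbd : ωb ≠ ωd) (hcd : ωc ≠ ωd)
    (a b c d : ℝ)
    (hXa : X ωa = a) (hXb : X ωb = b) (hXc : X ωc = c) (hXd : X ωd = d)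
    (h1 : a ≤ b) (h2 : b < c) (h3 : c ≤ d)
    (D p1 q1 p2 v : ℝ)
    (hD : D = a + b - c - d)
    (hp1 : p1 = (b - d) / D) (hq1 : q1 = (a - c) / D) (hp2 : p2 = (b - c) / D)
    (hv : v = (a * b - c * d) / D)
    (C1 C2 : Ω → Set Ω)
    (hC1 : C1 = fun ω => if ω = ωa ∨ ω = ωd then ({ωa, ωd} : Set Ω)
                 else if ω = ωb ∨ ω = ωc then ({ωb, ωc} : Set Ω) else {ω})
    (hC2 : C2 = fun ω => if ω = ωa ∨ ω = ωc then ({ωa, ωc} : Set Ω)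
                 else if ω = ωb ∨ ω = ωd then ({ωb, ωd} : Set Ω) else {ω})
    (μ : Ω → ℝ)
    (hμ : μ = fun ω => if ω = ωa then p2 * p1 else if ω = ωd then p2 * (1 - p1)
                 else if ω = ωb then (1 - p2) * q1
                 else if ω = ωc then (1 - p2) * (1 - q1) else 0) :
    D < 0 ∧ IsPrior μ ∧ suppSet μ = {ωa, ωb, ωc, ωd} ∧
    (0 < p1 ∧ p1 < 1) ∧ (0 < q1 ∧ q1 < 1) ∧ (0 < p2 ∧ p2 < 1) ∧
    (∀ (i : Fin 2) (ω : Ω), ω ∈ suppSet μ → condExp μ X (![C1, C2] i ω) = v) ∧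
    NonSeparableAt ![C1, C2] X μ v ∧ b < v ∧ v < c := by
  subst hD; subst hp1; subst hq1; subst hp2; subst hv
  have hDneg : a + b - c - d < 0 := by linarith
  have hDne : a + b - c - d ≠ 0 := ne_of_lt hDneg
  have hp1pos : 0 < (b - d) / (a + b - c - d) :=
    div_pos_iff.mpr (Or.inr ⟨by linarith, hDneg⟩)
  have h1p1 : (1 : ℝ) - (b - d) / (a + b - c - d) = (a - c) / (a + b - c - d) := by
    field_simp; ring
  have h1p1pos : 0 < (1 : ℝ) - (b - d) / (a + b - c - d) := by
    rw [h1p1]; exact div_pos_iff.mpr (Or.inr ⟨by linarith, hDneg⟩)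
  have hq1pos : 0 < (a - c) / (a + b - c - d) :=
    div_pos_iff.mpr (Or.inr ⟨by linarith, hDneg⟩)
  have h1q1 : (1 : ℝ) - (a - c) / (a + b - c - d) = (b - d) / (a + b - c - d) := by
    field_simp; ring
  have h1q1pos : 0 < (1 : ℝ) - (a - c) / (a + b - c - d) := by
    rw [h1q1]; exact hp1pos
  have hp2pos : 0 < (b - c) / (a + b - c - d) :=
    div_pos_iff.mpr (Or.inr ⟨by linarith, hDneg⟩)
  have h1p2 : (1 : ℝ) - (b - c) / (a + b - c - d) = (a - d) / (a + b - c - d) := by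
    field_simp; ring
  have h1p2pos : 0 < (1 : ℝ) - (b - c) / (a + b - c - d) := by
    rw [h1p2]; exact div_pos_iff.mpr (Or.inr ⟨by linarith, hDneg⟩)
  -- values of μ
  have hμa : μ ωa = (b - c) / (a + b - c - d) * ((b - d) / (a + b - c - d)) := by
    simp [hμ]
  have hμb : μ ωb = (1 - (b - c) / (a + b - c - d)) * ((a - c) / (a + b - c - d)) := by
    simp [hμ, Ne.symm hab, hbd]
  have hμc : μ ωc = (1 - (b - c) / (a + b - c - d)) * (1 - (a - c) / (a + b - c - d)) := by
    simp [hμ, Ne.symm hac, Ne.symm hbc, hcd]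
  have hμd : μ ωd = (b - c) / (a + b - c - d) * (1 - (b - d) / (a + b - c - d)) := by
    simp [hμ, Ne.symm had]
  have hμ0 : ∀ ω, ω ≠ ωa → ω ≠ ωb → ω ≠ ωc → ω ≠ ωd → μ ω = 0 := by
    intro ω h₁ h₂ h₃ h₄; simp [hμ, h₁, h₂, h₃, h₄]
  have hμapos : 0 < μ ωa := by rw [hμa]; exact mul_pos hp2pos hp1pos
  have hμbpos : 0 < μ ωb := by rw [hμb]; exact mul_pos h1p2pos hq1pos
  have hμcpos : 0 < μ ωc := by rw [hμc]; exact mul_pos h1p2pos h1q1pos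
  have hμdpos : 0 < μ ωd := by rw [hμd]; exact mul_pos hp2pos h1p1pos
  -- cells
  have hC1a : C1 ωa = ({ωa, ωd} : Set Ω) := by simp [hC1]
  have hC1d : C1 ωd = ({ωa, ωd} : Set Ω) := by simp [hC1]
  have hC1b : C1 ωb = ({ωb, ωc} : Set Ω) := by simp [hC1, Ne.symm hab, hbd]
  have hC1c : C1 ωc = ({ωb, ωc} : Set Ω) := by simp [hC1, Ne.symm hac, hcd]
  have hC2a : C2 ωa = ({ωa, ωc} : Set Ω) := by simp [hC2]
  have hC2c : C2 ωc = ({ωa, ωc} : Set Ω) := by simp [hC2]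
  have hC2b : C2 ωb = ({ωb, ωd} : Set Ω) := by simp [hC2, Ne.symm hab, hbc]
  have hC2d : C2 ωd = ({ωb, ωd} : Set Ω) := by simp [hC2, Ne.symm had, Ne.symm hcd]
  -- key conditional expectations
  have key1 : condExp μ X ({ωa, ωd} : Set Ω) = (a * b - c * d) / (a + b - c - d) := by
    rw [condExp_pair' μ X ωa ωd had, hμa, hμd, hXa, hXd,
      div_eq_div_iff (ne_of_gt (add_pos (mul_pos hp2pos hp1pos) (mul_pos hp2pos h1p1pos))) hDne]
    field_simp
    ring
  have key2 : condExp μ X ({ωb, ωc} : Set Ω) = (a * b - c * d) / (a + b - c - d) := by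
    rw [condExp_pair' μ X ωb ωc hbc, hμb, hμc, hXb, hXc,
      div_eq_div_iff (ne_of_gt (add_pos (mul_pos h1p2pos hq1pos) (mul_pos h1p2pos h1q1pos))) hDne]
    field_simp
    ring
  have key3 : condExp μ X ({ωa, ωc} : Set Ω) = (a * b - c * d) / (a + b - c - d) := by
    rw [condExp_pair' μ X ωa ωc hac, hμa, hμc, hXa, hXc,
      div_eq_div_iff (ne_of_gt (add_pos (mul_pos hp2pos hp1pos) (mul_pos h1p2pos h1q1pos))) hDne]
    field_simp
    ring
  have key4 : condExp μ X ({ωb, ωd} : Set Ω) = (a * b - c * d) / (a + b - c - d) := by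
    rw [condExp_pair' μ X ωb ωd hbd, hμb, hμd, hXb, hXd,
      div_eq_div_iff (ne_of_gt (add_pos (mul_pos h1p2pos hq1pos) (mul_pos hp2pos h1p1pos))) hDne]
    field_simp
    ring
  -- prior
  have hnonneg : ∀ ω, 0 ≤ μ ω := by
    intro ω
    by_cases e1 : ω = ωa; · subst e1; exact le_of_lt hμapos
    by_cases e2 : ω = ωb; · subst e2; exact le_of_lt hμbpos
    by_cases e3 : ω = ωc; · subst e3; exact le_of_lt hμcpos
    by_cases e4 : ω = ωd; · subst e4; exact le_of_lt hμdpos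
    rw [hμ0 ω e1 e2 e3 e4]
  have hsum : ∑ ω, μ ω = 1 := by
    rw [sum_four' μ ωa ωb ωc ωd hab hac had hbc hbd hcd hμ0, hμa, hμb, hμc, hμd]
    field_simp
    ring
  have hsupp : suppSet μ = ({ωa, ωb, ωc, ωd} : Set Ω) := by
    ext ω
    simp only [suppSet, Set.mem_setOf_eq, Set.mem_insert_iff, Set.mem_singleton_iff]
    constructor
    · intro hpos
      by_contra hcon
      push_neg at hcon
      rw [hμ0 ω hcon.1 hcon.2.1 hcon.2.2.1 hcon.2.2.2] at hpos
      exact lt_irrefl 0 hpos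
    · rintro (rfl | rfl | rfl | rfl)
      exacts [hμapos, hμbpos, hμcpos, hμdpos]
  have hcond : ∀ (i : Fin 2) (ω : Ω), ω ∈ suppSet μ →
      condExp μ X (![C1, C2] i ω) = (a * b - c * d) / (a + b - c - d) := by
    intro i ω hω
    rw [hsupp] at hω
    simp only [Set.mem_insert_iff, Set.mem_singleton_iff] at hω
    fin_cases i
    · show condExp μ X (C1 ω) = (a * b - c * d) / (a + b - c - d)
      rcases hω with rfl | rfl | rfl | rfl
      · rw [hC1a]; exact key1
      · rw [hC1b]; exact key2
      · rw [hC1c]; exact key2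
      · rw [hC1d]; exact key1
    · show condExp μ X (C2 ω) = (a * b - c * d) / (a + b - c - d)
      rcases hω with rfl | rfl | rfl | rfl
      · rw [hC2a]; exact key3
      · rw [hC2b]; exact key4
      · rw [hC2c]; exact key3
      · rw [hC2d]; exact key4
  have hbv : b < (a * b - c * d) / (a + b - c - d) := by
    rw [lt_div_iff_of_neg hDneg]
    nlinarith [mul_pos (show (0:ℝ) < c - b by linarith) (show (0:ℝ) < d - b by linarith)]
  have hvc : (a * b - c * d) / (a + b - c - d) < c := by
    rw [div_lt_iff_of_neg hDneg]
    nlinarith [mul_pos (show (0:ℝ) < c - a by linarith) (show (0:ℝ) < c - b by linarith)]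
  refine ⟨hDneg, ⟨hnonneg, hsum⟩, hsupp, ⟨hp1pos, by linarith⟩, ⟨hq1pos, by linarith⟩,
    ⟨hp2pos, by linarith⟩, hcond, ⟨⟨ωb, ?_, ?_⟩, hcond⟩, hbv, hvc⟩
  · rw [hsupp]; simp
  · rw [hXb]; exact ne_of_lt hbv
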